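/- arXiv:1803.10994 — 2 statements merged into one kernel-verified Lean document; each statement's English description precedes it below -/
import Mathlib

section
/- Let $M_1 \in \mathbb{C}^{O_1 \times N_1}$, $M_2 \in \mathbb{C}^{O_2 \times N_2}$, $M_3 \in \mathbb{C}^{O_3 \times N_3}$ have restricted isometry constants $\delta_{s_1}(M_1)$, $\delta_{s_2}(M_2)$, $\delta_{s_3}(M_3)$ for positive integers $s_k \le N_k$. Then the Kronecker product $M_1 \otimes M_2 \otimes M_3$ satisfies $(1-\delta)\|x\|^2 \le \|(M_1 \otimes M_2 \otimes M_3)x\|^2 \le (1+\delta)\|x\|^2$ with $\delta = (1+\delta_{s_1}(M_1))(1+\delta_{s_2}(M_2))(1+\delta_{s_3}(M_3)) - 1$ for every hierarchically $(s_1,s_2,s_3)$-sparse vector $x \in \mathbb{C}^{N_1 N_2 N_3}$. -/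
open scoped BigOperators Matrix Kronecker

noncomputable section

/-- Squared `ℓ₂` norm of a finitely indexed complex vector. -/
def sqnorm {ι : Type*} [Fintype ι] (x : ι → ℂ) : ℝ := ∑ i, ‖x i‖ ^ 2

/-- A vector is `s`-sparse if at most `s` of its entries are nonzero. -/
def Sparse {ι : Type*} (s : ℕ) (x : ι → ℂ) : Prop := (Function.support x).ncard ≤ s

/-- Hierarchical `(s₁, s₂)`-sparsity: at most `s₁` blocks are nonzero and every
block is `s₂`-sparse. -/
def HiSparse2 {ι₁ ι₂ : Type*} (s₁ s₂ : ℕ) (x : ι₁ × ι₂ → ℂ) : Prop :=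
  {i : ι₁ | ∃ j, x (i, j) ≠ 0}.ncard ≤ s₁ ∧ ∀ i : ι₁, Sparse s₂ fun j => x (i, j)

/-- Hierarchical `(s₁, s₂, s₃)`-sparsity: at most `s₁` blocks are nonzero and every
block is hierarchically `(s₂, s₃)`-sparse. -/
def HiSparse3 {ι₁ ι₂ ι₃ : Type*} (s₁ s₂ s₃ : ℕ) (x : ι₁ × ι₂ × ι₃ → ℂ) : Prop :=
  {i : ι₁ | ∃ jk, x (i, jk) ≠ 0}.ncard ≤ s₁ ∧ ∀ i : ι₁, HiSparse2 s₂ s₃ fun jk => x (i, jk)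

/-- `A` satisfies the restricted isometry property of order `s` with constant `δ`. -/
def SatRIP {O ι : Type*} [Fintype O] [Fintype ι] (A : Matrix O ι ℂ) (s : ℕ) (δ : ℝ) : Prop :=
  ∀ x : ι → ℂ, Sparse s x →
    (1 - δ) * sqnorm x ≤ sqnorm (A.mulVec x) ∧ sqnorm (A.mulVec x) ≤ (1 + δ) * sqnorm x

/-- The restricted isometry constant `δ_s(A)`. -/
def RIPconst {O ι : Type*} [Fintype O] [Fintype ι] (A : Matrix O ι ℂ) (s : ℕ) : ℝ :=
  sInf {δ : ℝ | 0 ≤ δ ∧ SatRIP A s δ}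

lemma sqnorm_nonneg {ι : Type*} [Fintype ι] (x : ι → ℂ) : 0 ≤ sqnorm x :=
  Finset.sum_nonneg fun i _ => by positivity

lemma sqnorm_eq_zero {ι : Type*} [Fintype ι] {x : ι → ℂ} (h : sqnorm x = 0) : x = 0 := by
  funext i
  have := (Finset.sum_eq_zero_iff_of_nonneg (fun i _ => by positivity)).1 h i (Finset.mem_univ i)
  have : ‖x i‖ = 0 := by nlinarith [norm_nonneg (x i)]
  simpa using this

lemma exists_satRIP {O ι : Type*} [Fintype O] [Fintype ι] (A : Matrix O ι ℂ) (s : ℕ) :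
    ∃ δ : ℝ, 0 ≤ δ ∧ SatRIP A s δ := by
  set C : ℝ := ∑ o : O, ∑ i : ι, ‖A o i‖ ^ 2 with hC
  have hC0 : 0 ≤ C := Finset.sum_nonneg fun o _ => Finset.sum_nonneg fun i _ => by positivity
  refine ⟨max 1 C, le_trans zero_le_one (le_max_left _ _), ?_⟩
  intro x _
  have hX := sqnorm_nonneg x
  have hAx := sqnorm_nonneg (A.mulVec x)
  constructor
  · have h1 : 1 - max 1 C ≤ 0 := by
      have := le_max_left 1 C; linarith
    nlinarith
  · have key : sqnorm (A.mulVec x) ≤ C * sqnorm x := by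
      rw [sqnorm, hC, Finset.sum_mul]
      refine Finset.sum_le_sum fun o _ => ?_
      have h1 : ‖A.mulVec x o‖ ≤ ∑ i, ‖A o i‖ * ‖x i‖ := by
        refine le_trans (norm_sum_le _ _) ?_
        exact Finset.sum_le_sum fun i _ => by rw [norm_mul]
      have h2 : (∑ i, ‖A o i‖ * ‖x i‖) ^ 2 ≤ (∑ i, ‖A o i‖ ^ 2) * ∑ i, ‖x i‖ ^ 2 :=
        Finset.sum_mul_sq_le_sq_mul_sq _ _ _
      have h3 : ‖A.mulVec x o‖ ^ 2 ≤ (∑ i, ‖A o i‖ * ‖x i‖) ^ 2 := by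
        have hnn : (0:ℝ) ≤ ‖A.mulVec x o‖ := norm_nonneg _
        nlinarith
      calc ‖A.mulVec x o‖ ^ 2 ≤ (∑ i, ‖A o i‖ ^ 2) * ∑ i, ‖x i‖ ^ 2 := le_trans h3 h2
        _ = (∑ i, ‖A o i‖ ^ 2) * sqnorm x := rfl
    have : C ≤ max 1 C := le_max_right _ _
    nlinarith

lemma RIPset_nonempty {O ι : Type*} [Fintype O] [Fintype ι] (A : Matrix O ι ℂ) (s : ℕ) :
    Set.Nonempty {δ : ℝ | 0 ≤ δ ∧ SatRIP A s δ} := by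
  obtain ⟨δ, h1, h2⟩ := exists_satRIP A s
  exact ⟨δ, h1, h2⟩

lemma RIPconst_nonneg {O ι : Type*} [Fintype O] [Fintype ι] (A : Matrix O ι ℂ) (s : ℕ) :
    0 ≤ RIPconst A s :=
  le_csInf (RIPset_nonempty A s) fun _ hδ => hδ.1

lemma satRIP_RIPconst {O ι : Type*} [Fintype O] [Fintype ι] (A : Matrix O ι ℂ) (s : ℕ) :
    SatRIP A s (RIPconst A s) := by
  intro x hx
  by_cases hX : sqnorm x = 0
  · have hx0 := sqnorm_eq_zero hX
    subst hx0
    simp only [Matrix.mulVec_zero]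
    have : sqnorm (0 : O → ℂ) = 0 := by simp [sqnorm]
    rw [this, hX]
    norm_num
  · have hXpos : 0 < sqnorm x := lt_of_le_of_ne (sqnorm_nonneg x) (Ne.symm hX)
    constructor
    · have h1 : (sqnorm x - sqnorm (A.mulVec x)) / sqnorm x ≤ RIPconst A s := by
        refine le_csInf (RIPset_nonempty A s) fun δ hδ => ?_
        have := (hδ.2 x hx).1
        rw [div_le_iff₀ hXpos]
        nlinarith
      have := (div_le_iff₀ hXpos).1 h1
      nlinarith
    · have h1 : (sqnorm (A.mulVec x) - sqnorm x) / sqnorm x ≤ RIPconst A s := by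
        refine le_csInf (RIPset_nonempty A s) fun δ hδ => ?_
        have := (hδ.2 x hx).2
        rw [div_le_iff₀ hXpos]
        nlinarith
      have := (div_le_iff₀ hXpos).1 h1
      nlinarith

lemma mulVec_kron {O₁ ι₁ O₂ ι₂ : Type*} [Fintype O₁] [Fintype ι₁] [Fintype O₂] [Fintype ι₂]
    (A : Matrix O₁ ι₁ ℂ) (B : Matrix O₂ ι₂ ℂ) (x : ι₁ × ι₂ → ℂ) (o₁ : O₁) (o₂ : O₂) :
    (A ⊗ₖ B).mulVec x (o₁, o₂)
      = A.mulVec (fun i => B.mulVec (fun j => x (i, j)) o₂) o₁ := by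
  simp only [Matrix.mulVec, dotProduct, Fintype.sum_prod_type,
    Matrix.kroneckerMap_apply, Finset.mul_sum]
  refine Finset.sum_congr rfl fun i _ => Finset.sum_congr rfl fun j _ => by ring

lemma sqnorm_prod {ι₁ ι₂ : Type*} [Fintype ι₁] [Fintype ι₂] (x : ι₁ × ι₂ → ℂ) :
    sqnorm x = ∑ i, sqnorm (fun j => x (i, j)) := by
  simp [sqnorm, Fintype.sum_prod_type]

lemma kron_step {O₁ ι₁ O₂ ι₂ : Type*} [Fintype O₁] [Fintype ι₁] [Fintype O₂] [Fintype ι₂]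
    (A : Matrix O₁ ι₁ ℂ) (B : Matrix O₂ ι₂ ℂ) (s₁ : ℕ) (δ₁ δ₂ : ℝ)
    (hδ₁ : 0 ≤ δ₁) (hδ₂ : 0 ≤ δ₂) (hA : SatRIP A s₁ δ₁)
    (P : (ι₂ → ℂ) → Prop)
    (hP : ∀ v : ι₂ → ℂ, P v →
      (1 - δ₂) * sqnorm v ≤ sqnorm (B.mulVec v) ∧ sqnorm (B.mulVec v) ≤ (1 + δ₂) * sqnorm v)
    (x : ι₁ × ι₂ → ℂ)
    (hx₁ : {i : ι₁ | ∃ j, x (i, j) ≠ 0}.ncard ≤ s₁)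
    (hx₂ : ∀ i, P fun j => x (i, j)) :
    (1 - ((1 + δ₁) * (1 + δ₂) - 1)) * sqnorm x ≤ sqnorm ((A ⊗ₖ B).mulVec x) ∧
      sqnorm ((A ⊗ₖ B).mulVec x) ≤ (1 + ((1 + δ₁) * (1 + δ₂) - 1)) * sqnorm x := by
  set v : O₂ → ι₁ → ℂ := fun o₂ i => B.mulVec (fun j => x (i, j)) o₂ with hv
  have hsp : ∀ o₂, Sparse s₁ (v o₂) := by
    intro o₂
    refine le_trans (Set.ncard_le_ncard ?_ (Set.toFinite _)) hx₁
    intro i hi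
    simp only [Function.mem_support] at hi
    by_contra h
    simp only [Set.mem_setOf_eq, not_exists, not_not] at h
    exact hi (by simp [hv, Matrix.mulVec, dotProduct, h])
  have hT : sqnorm ((A ⊗ₖ B).mulVec x) = ∑ o₂, sqnorm (A.mulVec (v o₂)) := by
    rw [sqnorm]
    rw [Fintype.sum_prod_type]
    rw [Finset.sum_comm]
    refine Finset.sum_congr rfl fun o₂ _ => Finset.sum_congr rfl fun o₁ _ => ?_
    rw [mulVec_kron]
  have hS : ∑ o₂, sqnorm (v o₂) = ∑ i, sqnorm (B.mulVec fun j => x (i, j)) := by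
    simp only [sqnorm]
    rw [Finset.sum_comm]
  have hlow : (1 - δ₁) * (∑ o₂, sqnorm (v o₂)) ≤ sqnorm ((A ⊗ₖ B).mulVec x) := by
    rw [hT, Finset.mul_sum]
    exact Finset.sum_le_sum fun o₂ _ => (hA _ (hsp o₂)).1
  have hhigh : sqnorm ((A ⊗ₖ B).mulVec x) ≤ (1 + δ₁) * ∑ o₂, sqnorm (v o₂) := by
    rw [hT, Finset.mul_sum]
    exact Finset.sum_le_sum fun o₂ _ => (hA _ (hsp o₂)).2
  have hSlow : (1 - δ₂) * sqnorm x ≤ ∑ o₂, sqnorm (v o₂) := by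
    rw [hS, sqnorm_prod x, Finset.mul_sum]
    exact Finset.sum_le_sum fun i _ => (hP _ (hx₂ i)).1
  have hShigh : ∑ o₂, sqnorm (v o₂) ≤ (1 + δ₂) * sqnorm x := by
    rw [hS, sqnorm_prod x, Finset.mul_sum]
    exact Finset.sum_le_sum fun i _ => (hP _ (hx₂ i)).2
  have hX := sqnorm_nonneg x
  have hSnn : 0 ≤ ∑ o₂, sqnorm (v o₂) := Finset.sum_nonneg fun _ _ => sqnorm_nonneg _
  constructor
  · nlinarith [mul_le_mul_of_nonneg_left hShigh hδ₁]
  · nlinarith [mul_le_mul_of_nonneg_left hShigh (by linarith : (0:ℝ) ≤ 1 + δ₁)]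

/-- The threefold Kronecker product `M₁ ⊗ M₂ ⊗ M₃` satisfies the
hierarchical RIP with constant
`δ = (1 + δ_{s₁}(M₁))(1 + δ_{s₂}(M₂))(1 + δ_{s₃}(M₃)) - 1` on hierarchically
`(s₁, s₂, s₃)`-sparse vectors. -/
theorem kronecker3_hiRIP {O₁ N₁ O₂ N₂ O₃ N₃ : ℕ}
    (M₁ : Matrix (Fin O₁) (Fin N₁) ℂ) (M₂ : Matrix (Fin O₂) (Fin N₂) ℂ)
    (M₃ : Matrix (Fin O₃) (Fin N₃) ℂ) (s₁ s₂ s₃ : ℕ)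
    (hs₁ : 0 < s₁) (hs₂ : 0 < s₂) (hs₃ : 0 < s₃)
    (hs₁N : s₁ ≤ N₁) (hs₂N : s₂ ≤ N₂) (hs₃N : s₃ ≤ N₃) :
    ∀ x : Fin N₁ × Fin N₂ × Fin N₃ → ℂ, HiSparse3 s₁ s₂ s₃ x →
      (1 - ((1 + RIPconst M₁ s₁) * (1 + RIPconst M₂ s₂) * (1 + RIPconst M₃ s₃) - 1)) * sqnorm x
          ≤ sqnorm ((M₁ ⊗ₖ (M₂ ⊗ₖ M₃)).mulVec x) ∧
        sqnorm ((M₁ ⊗ₖ (M₂ ⊗ₖ M₃)).mulVec x)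
          ≤ (1 + ((1 + RIPconst M₁ s₁) * (1 + RIPconst M₂ s₂) * (1 + RIPconst M₃ s₃) - 1))
              * sqnorm x := by
  intro x hx
  obtain ⟨hx1, hx2⟩ := hx
  set δ₁ := RIPconst M₁ s₁ with hδ₁def
  set δ₂ := RIPconst M₂ s₂ with hδ₂def
  set δ₃ := RIPconst M₃ s₃ with hδ₃def
  have d1 := RIPconst_nonneg M₁ s₁
  have d2 := RIPconst_nonneg M₂ s₂
  have d3 := RIPconst_nonneg M₃ s₃
  have r1 := satRIP_RIPconst M₁ s₁
  have r2 := satRIP_RIPconst M₂ s₂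
  have r3 := satRIP_RIPconst M₃ s₃
  have key := kron_step M₁ (M₂ ⊗ₖ M₃) s₁ δ₁ ((1 + δ₂) * (1 + δ₃) - 1)
    d1 (by nlinarith) r1 (HiSparse2 s₂ s₃)
    (fun v hv => kron_step M₂ M₃ s₂ δ₂ δ₃ d2 d3 r2 (Sparse s₃)
      (fun w hw => r3 w hw) v hv.1 hv.2)
    x hx1 hx2
  have eq1 : (1 + δ₁) * (1 + ((1 + δ₂) * (1 + δ₃) - 1)) = (1 + δ₁) * (1 + δ₂) * (1 + δ₃) := by
    ring
  rw [eq1] at key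
  exact key
end
end

section
/- There exists a universal constant $C > 0$ with the following property. Let $M = N$ be a positive integer (quadratic DFT case, $D = N$), let $L, K, K_\theta, K_\tau$ be positive integers, let $(\tau_p, \theta_p)_{p=0}^{L-1}$ be delay/angle pairs in $[0,1)^2$ satisfying the angular separation condition (any two distinct angles among $\theta_0,\dots,\theta_{L-1}$ differ by at least $2K_\theta/M$ in wrap-around distance) and the limited delays-per-angle condition (each distinct angle occurs in at most $K$ of the pairs), and let $\rho_0,\dots,\rho_{L-1} \in \mathbb{C}$. Set $W = \sum_{p=0}^{L-1} \rho_p \, u_{\tau_p} u_{\theta_p}^H \in \mathbb{C}^{N \times M}$. Then there exists a matrix $W_\Omega \in \mathbb{C}^{N \times M}$ having at most $L(2K_\theta+1)$ nonzero columns, each nonzero column having at most $K(2K_\tau+1)$ nonzero entries, such that $\|W - W_\Omega\|_F \le C\,(K_\theta^{-1/2} + K_\tau^{-1/2}) \sum_{p=0}^{L-1} |\rho_p|$, where $\|\cdot\|_F$ is the Frobenius norm. -/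
open scoped BigOperators Matrix

noncomputable section

/-- Array manifold vector `a(θ) ∈ ℂ^M`, `a(θ)_m = e^{-j 2π m θ}` (the delay manifold
`b(τ)` has the identical form). -/
def aVec (M : ℕ) (θ : ℝ) : Fin M → ℂ :=
  fun m => Complex.exp (-(((2 * Real.pi * (m : ℕ) * θ) : ℝ) : ℂ) * Complex.I)

/-- The `M × M` DFT matrix, `(F_M)_{m,n} = e^{-j 2π m n / M}`. -/
def dftMat (M : ℕ) : Matrix (Fin M) (Fin M) ℂ :=
  Matrix.of fun m n => Complex.exp (-(((2 * Real.pi * (m : ℕ) * (n : ℕ) / M) : ℝ) : ℂ) * Complex.I)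

/-- Discretized representation `u_θ = (1/M) F_M^H a(θ)` (same formula for `u_τ`). -/
def uVec (M : ℕ) (θ : ℝ) : Fin M → ℂ :=
  (1 / (M : ℂ)) • (dftMat M)ᴴ.mulVec (aVec M θ)

/-- Wrap-around distance between two points of `[0,1)`. -/
def wrapDist (x y : ℝ) : ℝ := min |x - y| (1 - |x - y|)

/-!
The entries of `u_θ` form a Dirichlet kernel centred at `N θ`:
`(u_θ)_n = (1/N) ∑_{m<N} e^{2πi m (n/N - θ)}`, and summing the geometric series gives
`|(u_θ)_n| ≤ 1/d` where `d` is the circular distance from `n` to the bin `round (N θ)`.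
Since each distance is attained by at most two bins, the energy of `u_θ` outside the `2K`
bins closest to `round (N θ)` is at most `2 ∑_{k ≥ K} 1/k² ≤ 4/K`, and its total energy is at
most `6`. Truncating both factors of every rank-one term `ρ_p u_{τ_p} u_{θ_p}^H` to these
windows therefore costs at most `2√6 (K_θ^{-1/2} + K_τ^{-1/2}) |ρ_p|` in Frobenius norm. The
columns kept are the `L` angular windows; by the separation condition the windows of distinct
angles are disjoint, so every column meets the delay windows of at most `K` paths.
-/

open Finset Real Matrix
open scoped Matrix.Norms.Frobenius

lemma norm_sub_one_mul_norm_geom_sum_le {z : ℂ} (hz : ‖z‖ = 1) (n : ℕ) :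
    ‖z - 1‖ * ‖∑ i ∈ range n, z ^ i‖ ≤ 2 := by
  rw [← norm_mul, mul_geom_sum]
  calc ‖z ^ n - 1‖ ≤ ‖z ^ n‖ + ‖(1 : ℂ)‖ := norm_sub_le _ _
    _ = 2 := by rw [norm_pow, hz]; norm_num

lemma four_mul_abs_sub_round_le_norm_exp_sub_one (δ : ℝ) :
    4 * |δ - round δ| ≤ ‖Complex.exp (Complex.I * ↑(2 * π * δ)) - 1‖ := by
  set e := δ - round δ
  have hsin : |Real.sin (π * δ)| = |Real.sin (π * e)| := by
    rw [show π * δ = π * e + (round δ : ℤ) * π by simp only [e]; ring, sin_add_int_mul_pi,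
      abs_mul, abs_neg_one_zpow, one_mul]
  have hjordan := mul_abs_le_abs_sin (x := π * e) (by
    rw [abs_mul, abs_of_pos pi_pos]
    nlinarith [abs_sub_round δ, pi_pos])
  rw [Complex.norm_exp_I_mul_ofReal_sub_one, norm_mul, Real.norm_eq_abs, Real.norm_eq_abs,
    show 2 * π * δ / 2 = π * δ by ring, hsin]
  rw [abs_mul, abs_of_pos pi_pos] at hjordan
  field_simp at hjordan
  norm_num
  linarith

lemma sum_inv_sq_le_of_card_fiber_le_two {ι : Type*} (s : Finset ι) (f : ι → ℕ) {K : ℕ}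
    (hK : 0 < K) (hf : ∀ j ∈ s, K ≤ f j) (hfib : ∀ k, #{j ∈ s | f j = k} ≤ 2) :
    ∑ j ∈ s, ((f j : ℝ) ^ 2)⁻¹ ≤ 4 / K := by
  classical
  have hsub : s.image f ⊆ Ioo (K - 1) ((s.image f).sup id + 1) := by
    intro k hk
    obtain ⟨j, hj, rfl⟩ := mem_image.mp hk
    have := hf j hj
    have : f j ≤ (s.image f).sup id := le_sup (f := id) hk
    rw [mem_Ioo]
    omega
  calc ∑ j ∈ s, ((f j : ℝ) ^ 2)⁻¹
      = ∑ k ∈ s.image f, #{j ∈ s | f j = k} • ((k : ℝ) ^ 2)⁻¹ :=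
        sum_comp (fun k : ℕ => ((k : ℝ) ^ 2)⁻¹) f
    _ ≤ ∑ k ∈ s.image f, 2 * ((k : ℝ) ^ 2)⁻¹ := by
        gcongr with k
        rw [nsmul_eq_mul]
        gcongr
        exact_mod_cast hfib k
    _ ≤ 2 * ∑ k ∈ Ioo (K - 1) ((s.image f).sup id + 1), ((k : ℝ) ^ 2)⁻¹ := by
        rw [← mul_sum]
        gcongr
    _ ≤ 2 * (2 / ((K - 1 : ℕ) + 1)) := by gcongr; exact sum_Ioo_inv_sq_le _ _
    _ = 4 / K := by rw [Nat.cast_sub hK]; push_cast; ring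

section L2

variable {𝕜 ι m n : Type*} [RCLike 𝕜] [Fintype ι] [Fintype m] [Fintype n]

lemma frobenius_norm_eq_sqrt (A : Matrix m n 𝕜) : ‖A‖ = √(∑ i, ∑ j, ‖A i j‖ ^ 2) := by
  simp only [frobenius_norm_def, Real.sqrt_eq_rpow, Real.rpow_two]

lemma frobenius_norm_vecMulVec_star (x : m → 𝕜) (y : n → 𝕜) :
    ‖vecMulVec x (star y)‖ = ‖WithLp.toLp 2 x‖ * ‖WithLp.toLp 2 y‖ := by
  rw [frobenius_norm_eq_sqrt, EuclideanSpace.norm_eq, EuclideanSpace.norm_eq,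
    ← Real.sqrt_mul (by positivity), sum_mul_sum]
  simp [vecMulVec_apply, mul_pow]

lemma frobenius_norm_vecMulVec_star_sub_le (x x' : m → 𝕜) (y y' : n → 𝕜) :
    ‖vecMulVec x (star y) - vecMulVec x' (star y')‖ ≤
      ‖WithLp.toLp 2 (x - x')‖ * ‖WithLp.toLp 2 y‖ +
        ‖WithLp.toLp 2 x'‖ * ‖WithLp.toLp 2 (y - y')‖ := by
  have hsplit : vecMulVec x (star y) - vecMulVec x' (star y') =
      vecMulVec (x - x') (star y) + vecMulVec x' (star (y - y')) := by
    rw [sub_vecMulVec, star_sub, vecMulVec_sub]; abel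
  rw [hsplit, ← frobenius_norm_vecMulVec_star, ← frobenius_norm_vecMulVec_star]
  exact norm_add_le _ _

lemma norm_sq_toLp_indicator [DecidableEq ι] (s : Finset ι) (f : ι → 𝕜) :
    ‖WithLp.toLp 2 ((s : Set ι).indicator f)‖ ^ 2 = ∑ i ∈ s, ‖f i‖ ^ 2 := by
  simp [EuclideanSpace.norm_sq_eq, Set.indicator_apply, apply_ite, sum_ite_mem]

end L2

section Sparsity

variable {α ι m n : Type*} [Semiring α] [Fintype ι]
  (c : ι → α) (x : ι → m → α) (y : ι → n → α)

lemma exists_ne_zero_of_sum_smul_vecMulVec_apply_ne_zero {i : m} {j : n}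
    (h : (∑ p, c p • vecMulVec (x p) (y p)) i j ≠ 0) : ∃ p, x p i ≠ 0 ∧ y p j ≠ 0 := by
  rw [Matrix.sum_apply] at h
  obtain ⟨p, -, hp⟩ := exists_ne_zero_of_sum_ne_zero h
  rw [Matrix.smul_apply, vecMulVec_apply, smul_eq_mul] at hp
  exact ⟨p, left_ne_zero_of_mul (right_ne_zero_of_mul hp),
    right_ne_zero_of_mul (right_ne_zero_of_mul hp)⟩

lemma ncard_setOf_exists_sum_smul_vecMulVec_apply_ne_zero_le [Finite n] {s : ℕ}
    (hy : ∀ p, (Function.support (y p)).ncard ≤ s) :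
    {j | ∃ i, (∑ p, c p • vecMulVec (x p) (y p)) i j ≠ 0}.ncard ≤ Fintype.card ι * s := by
  calc {j | ∃ i, (∑ p, c p • vecMulVec (x p) (y p)) i j ≠ 0}.ncard
      ≤ (⋃ p, Function.support (y p)).ncard := by
        refine Set.ncard_le_ncard (fun j ⟨i, hij⟩ => ?_) (Set.toFinite _)
        obtain ⟨p, -, hp⟩ := exists_ne_zero_of_sum_smul_vecMulVec_apply_ne_zero c x y hij
        exact Set.mem_iUnion.mpr ⟨p, hp⟩
    _ ≤ ∑ p, (Function.support (y p)).ncard := Set.ncard_iUnion_le_of_fintype _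
    _ ≤ Fintype.card ι * s := by
        simpa using sum_le_sum fun p (_ : p ∈ univ) => hy p

lemma ncard_setOf_sum_smul_vecMulVec_apply_ne_zero_le [Finite m] (j : n) {r s : ℕ}
    (hy : {p | y p j ≠ 0}.ncard ≤ r) (hx : ∀ p, (Function.support (x p)).ncard ≤ s) :
    {i | (∑ p, c p • vecMulVec (x p) (y p)) i j ≠ 0}.ncard ≤ r * s := by
  classical
  set P : Finset ι := {p | y p j ≠ 0}
  have hP : #P ≤ r := by rwa [← Set.ncard_coe_finset, coe_filter_univ]
  calc {i | (∑ p, c p • vecMulVec (x p) (y p)) i j ≠ 0}.ncard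
      ≤ (⋃ p ∈ P, Function.support (x p)).ncard := by
        refine Set.ncard_le_ncard (fun i hi => ?_) (Set.toFinite _)
        obtain ⟨p, hpi, hpj⟩ := exists_ne_zero_of_sum_smul_vecMulVec_apply_ne_zero c x y hi
        exact Set.mem_biUnion (by simpa [P] using hpj) hpi
    _ ≤ ∑ p ∈ P, (Function.support (x p)).ncard := P.set_ncard_biUnion_le _
    _ ≤ #P * s := by simpa using sum_le_sum fun p (_ : p ∈ P) => hx p
    _ ≤ r * s := Nat.mul_le_mul_right s hP

end Sparsity

lemma uVec_apply (N : ℕ) (θ : ℝ) (n : Fin N) :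
    uVec N θ n = (N : ℂ)⁻¹ *
      ∑ m ∈ range N, Complex.exp (Complex.I * ↑(2 * π * ((n : ℕ) / N - θ))) ^ m := by
  rw [uVec, Pi.smul_apply, smul_eq_mul, one_div, Matrix.mulVec, dotProduct,
    ← Fin.sum_univ_eq_sum_range]
  congr 1
  refine Finset.sum_congr rfl fun m _ => ?_
  rw [Matrix.conjTranspose_apply, dftMat, aVec, Matrix.of_apply, Complex.star_def,
    ← Complex.exp_conj, ← Complex.exp_add, ← Complex.exp_nat_mul]
  congr 1
  simp only [map_mul, map_neg, Complex.conj_ofReal, Complex.conj_I]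
  push_cast
  ring

lemma norm_uVec_le_one (N : ℕ) (θ : ℝ) (n : Fin N) : ‖uVec N θ n‖ ≤ 1 := by
  have hN : (0 : ℝ) < N := by exact_mod_cast n.pos
  rw [uVec_apply, norm_mul, norm_inv, Complex.norm_natCast, inv_mul_le_one₀ hN]
  calc _ ≤ ∑ m ∈ range N, ‖Complex.exp (Complex.I * ↑(2 * π * ((n : ℕ) / N - θ))) ^ m‖ :=
        norm_sum_le _ _
    _ = N := by simp only [norm_pow, Complex.norm_exp_I_mul_ofReal, one_pow, sum_const,
      card_range, nsmul_eq_mul, mul_one]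

lemma mul_abs_sub_round_mul_norm_uVec_le (N : ℕ) (θ : ℝ) (n : Fin N) :
    2 * N * |(n : ℕ) / N - θ - round ((n : ℕ) / N - θ)| * ‖uVec N θ n‖ ≤ 1 := by
  set δ : ℝ := (n : ℕ) / N - θ
  set z := Complex.exp (Complex.I * ↑(2 * π * δ))
  have hN : (0 : ℝ) < N := by exact_mod_cast n.pos
  have hz : ‖z‖ = 1 := Complex.norm_exp_I_mul_ofReal _
  have hgeom := norm_sub_one_mul_norm_geom_sum_le hz N
  have hround := four_mul_abs_sub_round_le_norm_exp_sub_one δ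
  rw [uVec_apply, norm_mul, norm_inv, Complex.norm_natCast]
  calc 2 * N * |δ - round δ| * ((N : ℝ)⁻¹ * ‖∑ m ∈ range N, z ^ m‖)
      = (4 * |δ - round δ|) * ‖∑ m ∈ range N, z ^ m‖ / 2 := by field_simp; ring
    _ ≤ ‖z - 1‖ * ‖∑ m ∈ range N, z ^ m‖ / 2 := by gcongr
    _ ≤ 1 := by linarith

/-- The DFT bin nearest to `N θ`, where the Dirichlet kernel `uVec N θ` peaks. -/
def nearestBin (N : ℕ) (θ : ℝ) : ℤ := round (N * θ)

/-- Distance from `j` to `nearestBin N θ` on the cycle `ℤ / N ℤ`. -/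
def binDist (N : ℕ) (θ : ℝ) (j : Fin N) : ℕ :=
  min ((j - nearestBin N θ) % N).natAbs ((j - nearestBin N θ) % N - N).natAbs

section binDist

variable {N : ℕ} (θ : ℝ) (j : Fin N)

lemma binDist_le_natAbs (c : ℤ) :
    binDist N θ j ≤ ((j : ℤ) - nearestBin N θ - N * c).natAbs := by
  have hN : (0 : ℤ) < N := by exact_mod_cast j.pos
  rw [binDist]
  set x : ℤ := j - nearestBin N θ
  have hr₀ := Int.emod_nonneg x hN.ne'
  have hrN := Int.emod_lt_of_pos x hN
  have hx : x - N * c = x % N + N * (x / N - c) := by linarith [Int.emod_add_mul_ediv x N]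
  rw [hx]
  rcases le_or_gt 0 (x / N - c) with ht | ht
  · have := mul_nonneg hN.le ht
    omega
  · have : (N : ℤ) * (x / N - c) ≤ -N := by nlinarith
    omega

lemma exists_natAbs_eq_binDist :
    ∃ c : ℤ, ((j : ℤ) - nearestBin N θ - N * c).natAbs = binDist N θ j := by
  set x : ℤ := j - nearestBin N θ
  have hx := Int.emod_add_mul_ediv x N
  rcases min_choice (x % N).natAbs (x % N - N).natAbs with h | h
  · exact ⟨x / N, by rw [binDist, h]; congr 1; linarith⟩
  · exact ⟨x / N + 1, by rw [binDist, h]; congr 1; linarith⟩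

lemma card_filter_binDist_eq_le (k : ℕ) : #{j : Fin N | binDist N θ j = k} ≤ 2 := by
  have hinj : Set.InjOn (fun j : Fin N => ((j : ℤ) - nearestBin N θ) % N) Set.univ := by
    intro j₁ _ j₂ _ h
    have hmod : (j₁ : ℤ) ≡ j₂ [ZMOD N] := Int.ModEq.add_right_cancel' (-nearestBin N θ) h
    rw [Int.ModEq, Int.emod_eq_of_lt (by omega) (by omega),
      Int.emod_eq_of_lt (by omega) (by omega)] at hmod
    exact Fin.ext (by exact_mod_cast hmod)
  calc #{j : Fin N | binDist N θ j = k}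
      ≤ #({(k : ℤ), (N : ℤ) - k} : Finset ℤ) := by
        refine card_le_card_of_injOn _ (fun j hj => ?_) (hinj.mono (by simp))
        have hN : (0 : ℤ) < N := by exact_mod_cast j.pos
        have := Int.emod_nonneg ((j : ℤ) - nearestBin N θ) hN.ne'
        have := Int.emod_lt_of_pos ((j : ℤ) - nearestBin N θ) hN
        have hk := (mem_filter.mp (mem_coe.mp hj)).2
        rw [binDist] at hk
        simp only [coe_insert, coe_singleton, Set.mem_insert_iff, Set.mem_singleton_iff]
        omega
    _ ≤ 2 := card_le_two

end binDist

def window (N K : ℕ) (θ : ℝ) : Finset (Fin N) := {j | binDist N θ j < K}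

lemma card_window_le (N K : ℕ) (θ : ℝ) : #(window N K θ) ≤ 2 * K := by
  calc #(window N K θ) ≤ 2 * #(range K) :=
        card_le_mul_card_image_of_maps_to (fun j hj => mem_range.mpr (mem_filter.mp hj).2) 2
          fun k _ => (card_le_card (filter_subset_filter _ (subset_univ _))).trans
            (card_filter_binDist_eq_le θ k)
    _ = 2 * K := by rw [card_range]

lemma wrapDist_le_abs_sub_sub_intCast (x y : ℝ) (c : ℤ) : wrapDist x y ≤ |x - y - c| := by
  rcases eq_or_ne c 0 with rfl | hc
  · rw [wrapDist, Int.cast_zero, sub_zero]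
    exact min_le_left _ _
  · have h1 : (1 : ℝ) ≤ |(c : ℝ)| := by exact_mod_cast Int.one_le_abs hc
    have h2 := abs_sub_abs_le_abs_sub (c : ℝ) (x - y)
    rw [abs_sub_comm (c : ℝ)] at h2
    rw [wrapDist]
    exact (min_le_right _ _).trans (by linarith)

lemma wrapDist_lt_of_mem_window {N K : ℕ} {x y : ℝ} {j : Fin N}
    (hx : j ∈ window N K x) (hy : j ∈ window N K y) : wrapDist x y < 2 * K / N := by
  have hN : (0 : ℝ) < N := by exact_mod_cast j.pos
  obtain ⟨cx, hcx⟩ := exists_natAbs_eq_binDist x j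
  obtain ⟨cy, hcy⟩ := exists_natAbs_eq_binDist y j
  have hKx : |((j : ℤ) - nearestBin N x - N * cx : ℤ)| + 1 ≤ (K : ℤ) := by
    have := (mem_filter.mp hx).2; rw [Int.abs_eq_natAbs]; omega
  have hKy : |((j : ℤ) - nearestBin N y - N * cy : ℤ)| + 1 ≤ (K : ℤ) := by
    have := (mem_filter.mp hy).2; rw [Int.abs_eq_natAbs]; omega
  have hKx' : |((j : ℕ) : ℝ) - nearestBin N x - N * cx| + 1 ≤ K := by exact_mod_cast hKx
  have hKy' : |((j : ℕ) : ℝ) - nearestBin N y - N * cy| + 1 ≤ K := by exact_mod_cast hKy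
  have hrx : |N * x - nearestBin N x| ≤ 1 / 2 := abs_sub_round _
  have hry : |N * y - nearestBin N y| ≤ 1 / 2 := abs_sub_round _
  -- `N x` and `N y` both lie within `K - 1/2` of the residue class of `j` modulo `N`.
  have hsum : |N * (x - y - ((cy - cx : ℤ) : ℝ))| < 2 * K := by
    obtain ⟨hx₁, hx₂⟩ := abs_le.mp hrx
    obtain ⟨hy₁, hy₂⟩ := abs_le.mp hry
    obtain ⟨hcx₁, hcx₂⟩ := abs_le.mp (le_sub_iff_add_le.mpr hKx')
    obtain ⟨hcy₁, hcy₂⟩ := abs_le.mp (le_sub_iff_add_le.mpr hKy')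
    push_cast
    rw [abs_lt]
    constructor <;> linarith
  rw [abs_mul, abs_of_pos hN] at hsum
  rw [lt_div_iff₀ hN]
  calc wrapDist x y * N ≤ |x - y - ((cy - cx : ℤ) : ℝ)| * N := by
        gcongr; exact wrapDist_le_abs_sub_sub_intCast x y _
    _ < 2 * K := by linarith

lemma binDist_mul_norm_uVec_le_one {N : ℕ} (θ : ℝ) (j : Fin N) :
    (binDist N θ j : ℝ) * ‖uVec N θ j‖ ≤ 1 := by
  have hN : (0 : ℝ) < N := by exact_mod_cast j.pos
  set δ : ℝ := (j : ℕ) / N - θ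
  have hdecay := mul_abs_sub_round_mul_norm_uVec_le N θ j
  have hone := norm_uVec_le_one N θ j
  have hdist : (binDist N θ j : ℝ) ≤ |((j : ℕ) : ℝ) - nearestBin N θ - N * round δ| := by
    have h := (Nat.cast_le (α := ℝ)).mpr (binDist_le_natAbs θ j (round δ))
    rw [Nat.cast_natAbs] at h
    push_cast at h
    exact h
  have hround : |N * θ - nearestBin N θ| ≤ 1 / 2 := abs_sub_round _
  have hbin : (binDist N θ j : ℝ) ≤ N * |δ - round δ| + 1 / 2 := by
    have hjδ : ((j : ℕ) : ℝ) = N * δ + N * θ := by simp only [δ]; field_simp; ring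
    calc (binDist N θ j : ℝ) ≤ |((j : ℕ) : ℝ) - nearestBin N θ - N * round δ| := hdist
      _ = |N * (δ - round δ) + (N * θ - nearestBin N θ)| := by rw [hjδ]; ring_nf
      _ ≤ |N * (δ - round δ)| + |N * θ - nearestBin N θ| := abs_add_le _ _
      _ ≤ |N * (δ - round δ)| + 1 / 2 := by gcongr
      _ = N * |δ - round δ| + 1 / 2 := by rw [abs_mul, abs_of_pos hN]
  calc (binDist N θ j : ℝ) * ‖uVec N θ j‖ ≤ (N * |δ - round δ| + 1 / 2) * ‖uVec N θ j‖ := by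
        gcongr
    _ = 2 * N * |δ - round δ| * ‖uVec N θ j‖ / 2 + ‖uVec N θ j‖ / 2 := by ring
    _ ≤ 1 := by linarith

lemma sum_compl_window_norm_sq_uVec_le {N K : ℕ} (hK : 0 < K) (θ : ℝ) :
    ∑ j ∈ (window N K θ)ᶜ, ‖uVec N θ j‖ ^ 2 ≤ 4 / K := by
  have hfar : ∀ j ∈ (window N K θ)ᶜ, K ≤ binDist N θ j := fun j hj => by
    simpa [window] using hj
  calc ∑ j ∈ (window N K θ)ᶜ, ‖uVec N θ j‖ ^ 2
      ≤ ∑ j ∈ (window N K θ)ᶜ, ((binDist N θ j : ℝ) ^ 2)⁻¹ := by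
        refine sum_le_sum fun j hj => ?_
        have hpos : (0 : ℝ) < binDist N θ j := by exact_mod_cast hK.trans_le (hfar j hj)
        rw [← inv_pow]
        gcongr
        rw [← one_div, le_div_iff₀ hpos, mul_comm]
        exact binDist_mul_norm_uVec_le_one θ j
    _ ≤ 4 / K := sum_inv_sq_le_of_card_fiber_le_two _ _ hK hfar fun k =>
        (card_le_card (filter_subset_filter _ (subset_univ _))).trans
          (card_filter_binDist_eq_le θ k)

lemma sum_norm_sq_uVec_le_six (N : ℕ) (θ : ℝ) : ∑ j, ‖uVec N θ j‖ ^ 2 ≤ 6 := by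
  rw [← sum_add_sum_compl (window N 1 θ)]
  have hnear : ∑ j ∈ window N 1 θ, ‖uVec N θ j‖ ^ 2 ≤ 2 :=
    calc ∑ j ∈ window N 1 θ, ‖uVec N θ j‖ ^ 2 ≤ ∑ _j ∈ window N 1 θ, (1 : ℝ) :=
          sum_le_sum fun j _ => pow_le_one₀ (norm_nonneg _) (norm_uVec_le_one N θ j)
      _ ≤ 2 := by simpa using (card_window_le N 1 θ : _)
  have hfar := sum_compl_window_norm_sq_uVec_le one_pos (N := N) θ
  norm_num at hfar
  linarith

def windowedUVec (N K : ℕ) (θ : ℝ) : Fin N → ℂ := (window N K θ : Set (Fin N)).indicator (uVec N θ)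

section Windowed

variable {N K : ℕ} (θ : ℝ)

lemma ncard_support_windowedUVec_le : (Function.support (windowedUVec N K θ)).ncard ≤ 2 * K :=
  calc (Function.support (windowedUVec N K θ)).ncard ≤ (window N K θ : Set (Fin N)).ncard :=
        Set.ncard_le_ncard (Set.support_indicator_subset) (Set.toFinite _)
    _ ≤ 2 * K := by rw [Set.ncard_coe_finset]; exact card_window_le N K θ

lemma norm_toLp_uVec_le : ‖WithLp.toLp 2 (uVec N θ)‖ ≤ √6 := by
  rw [EuclideanSpace.norm_eq]
  exact Real.sqrt_le_sqrt (sum_norm_sq_uVec_le_six N θ)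

lemma norm_toLp_windowedUVec_le : ‖WithLp.toLp 2 (windowedUVec N K θ)‖ ≤ √6 := by
  refine le_trans ?_ (norm_toLp_uVec_le (N := N) θ)
  rw [← sq_le_sq₀ (norm_nonneg _) (norm_nonneg _), windowedUVec, norm_sq_toLp_indicator,
    EuclideanSpace.norm_sq_eq]
  exact sum_le_univ_sum_of_nonneg fun _ => by positivity

lemma norm_toLp_uVec_sub_windowedUVec_le (hK : 0 < K) :
    ‖WithLp.toLp 2 (uVec N θ - windowedUVec N K θ)‖ ≤ 2 / √K := by
  have hsq : ‖WithLp.toLp 2 (uVec N θ - windowedUVec N K θ)‖ ^ 2 ≤ (2 / √K) ^ 2 := by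
    rw [windowedUVec, ← Set.indicator_compl, ← coe_compl, norm_sq_toLp_indicator, div_pow,
      Real.sq_sqrt (Nat.cast_nonneg K)]
    norm_num
    exact sum_compl_window_norm_sq_uVec_le hK θ
  exact (pow_le_pow_iff_left₀ (norm_nonneg _) (by positivity) two_ne_zero).mp hsq

lemma frobenius_norm_vecMulVec_uVec_sub_windowedUVec_le {Kτ Kθ : ℕ} (hKτ : 0 < Kτ)
    (hKθ : 0 < Kθ) (τ θ : ℝ) :
    ‖vecMulVec (uVec N τ) (star (uVec N θ)) -
        vecMulVec (windowedUVec N Kτ τ) (star (windowedUVec N Kθ θ))‖ ≤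
      2 * √6 * (1 / √Kθ + 1 / √Kτ) :=
  calc _ ≤ 2 / √Kτ * √6 + √6 * (2 / √Kθ) := by
        refine (frobenius_norm_vecMulVec_star_sub_le _ _ _ _).trans ?_
        gcongr
        · exact norm_toLp_uVec_sub_windowedUVec_le τ hKτ
        · exact norm_toLp_uVec_le θ
        · exact norm_toLp_windowedUVec_le τ
        · exact norm_toLp_uVec_sub_windowedUVec_le θ hKθ
    _ = 2 * √6 * (1 / √Kθ + 1 / √Kτ) := by ring

end Windowed

lemma frobenius_norm_sum_sub_sum_windowed_le {N L Kτ Kθ : ℕ} (hKτ : 0 < Kτ) (hKθ : 0 < Kθ)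
    (τ θ : Fin L → ℝ) (ρ : Fin L → ℂ) :
    ‖∑ p, ρ p • vecMulVec (uVec N (τ p)) (star (uVec N (θ p))) -
        ∑ p, ρ p • vecMulVec (windowedUVec N Kτ (τ p)) (star (windowedUVec N Kθ (θ p)))‖ ≤
      2 * √6 * (1 / √Kθ + 1 / √Kτ) * ∑ p, ‖ρ p‖ := by
  rw [← sum_sub_distrib, mul_sum]
  refine (norm_sum_le _ _).trans (sum_le_sum fun p _ => ?_)
  rw [← smul_sub, norm_smul, mul_comm]
  gcongr
  exact frobenius_norm_vecMulVec_uVec_sub_windowedUVec_le hKτ hKθ (τ p) (θ p)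

lemma ncard_setOf_mem_window_le {N L K Kθ : ℕ} {θ : Fin L → ℝ}
    (hsep : ∀ p q, θ p ≠ θ q → (2 * Kθ : ℝ) / N ≤ wrapDist (θ p) (θ q))
    (hcount : ∀ p, {q : Fin L | θ q = θ p}.ncard ≤ K) (j : Fin N) :
    {p | j ∈ window N Kθ (θ p)}.ncard ≤ K := by
  rcases Set.eq_empty_or_nonempty {p | j ∈ window N Kθ (θ p)} with h | ⟨p, hp⟩
  · simp [h]
  · refine le_trans (Set.ncard_le_ncard (fun q hq => ?_) (Set.toFinite _)) (hcount p)
    by_contra hqp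
    exact (hsep q p hqp).not_gt (wrapDist_lt_of_mem_window hq hp)

/-- (Sparse approximation of the off-grid delay-angular channel
representation, quadratic DFT case `M = N = D`.) Under the angular separation and
limited delays-per-angle conditions, `W = ∑_p ρ_p u_{τ_p} u_{θ_p}^H` can be approximated,
in Frobenius norm and up to an error `C (K_θ^{-1/2} + K_τ^{-1/2}) ∑_p |ρ_p|`, by a matrix
with at most `L(2K_θ+1)` nonzero columns, each with at most `K(2K_τ+1)` nonzero
entries. -/
theorem offgrid_hierarchical_sparse_approx :
    ∃ C : ℝ, 0 < C ∧
      ∀ (N L K Kθ Kτ : ℕ), 0 < N → 0 < L → 0 < K → 0 < Kθ → 0 < Kτ →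
      ∀ (τ θ : Fin L → ℝ),
        (∀ p, τ p ∈ Set.Ico (0 : ℝ) 1) → (∀ p, θ p ∈ Set.Ico (0 : ℝ) 1) →
        (∀ p q, θ p ≠ θ q → (2 * Kθ : ℝ) / N ≤ wrapDist (θ p) (θ q)) →
        (∀ p, {q : Fin L | θ q = θ p}.ncard ≤ K) →
        ∀ ρ : Fin L → ℂ,
        ∃ WΩ : Matrix (Fin N) (Fin N) ℂ,
          {j : Fin N | ∃ i : Fin N, WΩ i j ≠ 0}.ncard ≤ L * (2 * Kθ + 1) ∧
          (∀ j : Fin N, {i : Fin N | WΩ i j ≠ 0}.ncard ≤ K * (2 * Kτ + 1)) ∧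
          Real.sqrt (∑ i : Fin N, ∑ j : Fin N,
              ‖(∑ p, ρ p * uVec N (τ p) i * (starRingEnd ℂ) (uVec N (θ p) j)) - WΩ i j‖ ^ 2)
            ≤ C * (1 / Real.sqrt Kθ + 1 / Real.sqrt Kτ) * ∑ p, ‖ρ p‖ := by
  refine ⟨2 * √6, by positivity, fun N L K Kθ Kτ _ _ _ hKθ hKτ τ θ _ _ hsep hcount ρ => ?_⟩
  set x := fun p => windowedUVec N Kτ (τ p)
  set y := fun p => star (windowedUVec N Kθ (θ p))
  set W := ∑ p, ρ p • vecMulVec (uVec N (τ p)) (star (uVec N (θ p)))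
  set WΩ := ∑ p, ρ p • vecMulVec (x p) (y p)
  have hW : ∀ i j, ∑ p, ρ p * uVec N (τ p) i * (starRingEnd ℂ) (uVec N (θ p) j) = W i j :=
    fun i j => by simp [W, Matrix.sum_apply, vecMulVec_apply, mul_assoc]
  refine ⟨WΩ, ?_, fun j => ?_, ?_⟩
  · refine (ncard_setOf_exists_sum_smul_vecMulVec_apply_ne_zero_le ρ x y (s := 2 * Kθ)
      fun p => ?_).trans ?_
    · simpa [y, Function.support] using ncard_support_windowedUVec_le (θ p)
    · rw [Fintype.card_fin]; gcongr; omega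
  · refine (ncard_setOf_sum_smul_vecMulVec_apply_ne_zero_le ρ x y j
      ((Set.ncard_le_ncard (fun p hp => ?_) (Set.toFinite _)).trans
        (ncard_setOf_mem_window_le hsep hcount j))
      fun p => ncard_support_windowedUVec_le (τ p)).trans (by gcongr; omega)
    have hsupp : j ∈ Function.support (windowedUVec N Kθ (θ p)) := by simpa [y] using hp
    exact mem_coe.mp (Set.support_indicator_subset hsupp)
  · simp_rw [hW]
    exact (frobenius_norm_eq_sqrt (W - WΩ)).symm.trans_le
      (frobenius_norm_sum_sub_sum_windowed_le hKτ hKθ τ θ ρ)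
end
end
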